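/- (Theorem 1, part 2, GCN form.) Let the graph on n nodes be a disjoint union of k fully connected components encoded by c : Fin n → Fin k, with Ā = D̃^{-1/2} Ã D̃^{-1/2} (Ã = A + I, D̃ its diagonal degree matrix), and let H = σ(Ā X W) with X ∈ ℝ^{n×F}, W ∈ ℝ^{F×F'}, and σ applied entrywise. Suppose σ : ℝ → ℝ is injective, the linear map x ↦ x W from ℝ^{1×F} to ℝ^{1×F'} is injective, and the nodes i, j lie in distinct components S_a = {v : c(v) = c(i)} and S_b = {u : c(u) = c(j)} (c(i) ≠ c(j)) whose feature sums are never proportional: for every ε ∈ ℝ, Σ_{v ∈ S_a} X_{v:} ≠ ε · Σ_{u ∈ S_b} X_{u:}. Then the corresponding rows of H differ: H_{i:} ≠ H_{j:}. -/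

import Mathlib

/-!
On a disjoint union of cliques, `Ã` is the indicator of having the same label, so a node in a
component of size `s` has degree `s` and `Ā` has entry `1/s` inside components and `0` across
them. Row `i` of `Ā X` is therefore the mean of the feature rows over the component of `i`.
Injectivity of `σ` and of `x ↦ x W` turns `H i = H j` into equality of the two component means,
which makes the two component feature sums proportional.
-/

open Matrix Finset Function

section LabelClasses

variable {ι κ : Type*} [DecidableEq κ] (c : ι → κ)

/-- `Ã = A + I` for the disjoint union of cliques labelled by `c`. -/
def sameLabelMatrix : Matrix ι ι ℝ := of fun a b => if c a = c b then 1 else 0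

lemma add_one_eq_sameLabelMatrix [DecidableEq ι] {A : Matrix ι ι ℝ}
    (hA : ∀ i j, A i j = if i ≠ j ∧ c i = c j then 1 else 0) :
    A + 1 = sameLabelMatrix c := by
  ext a b
  by_cases hab : a = b
  · subst hab; simp [hA, sameLabelMatrix]
  · simp [hA, sameLabelMatrix, one_apply_ne hab, hab]

variable [Fintype ι]

def labelClass (a : ι) : Finset ι := {v | c v = c a}

lemma mem_labelClass_self (a : ι) : a ∈ labelClass c a := by simp [labelClass]

lemma labelClass_eq_of_label_eq {a b : ι} (h : c a = c b) : labelClass c a = labelClass c b := by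
  simp [labelClass, h]

lemma sum_sameLabelMatrix_row (a : ι) : ∑ b, sameLabelMatrix c a b = #(labelClass c a) := by
  simp [sameLabelMatrix, labelClass, eq_comm]

end LabelClasses

/-- The GCN normalisation `D̃^{-1/2} M D̃^{-1/2}`; `Ā = symmNormalize Ã`. -/
noncomputable def symmNormalize {ι : Type*} [Fintype ι] [DecidableEq ι] (M : Matrix ι ι ℝ) :
    Matrix ι ι ℝ :=
  diagonal (fun a => (√(∑ b, M a b))⁻¹) * M * diagonal (fun a => (√(∑ b, M a b))⁻¹)

section Normalization

variable {ι κ : Type*} [Fintype ι] [DecidableEq ι] [DecidableEq κ] (c : ι → κ)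

lemma symmNormalize_sameLabelMatrix_apply (a b : ι) :
    symmNormalize (sameLabelMatrix c) a b =
      if c a = c b then (#(labelClass c a) : ℝ)⁻¹ else 0 := by
  simp only [symmNormalize, mul_diagonal, diagonal_mul, sum_sameLabelMatrix_row]
  split_ifs with h
  · rw [labelClass_eq_of_label_eq c h.symm, sameLabelMatrix, of_apply, if_pos h, mul_one,
      ← Real.sqrt_inv, Real.mul_self_sqrt (by positivity)]
  · simp [sameLabelMatrix, h]

lemma symmNormalize_sameLabelMatrix_mul_row {β : Type*} (X : Matrix ι β ℝ) (a : ι) :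
    (symmNormalize (sameLabelMatrix c) * X) a =
      (#(labelClass c a) : ℝ)⁻¹ • ∑ v ∈ labelClass c a, X v := by
  ext f
  simp only [mul_apply, symmNormalize_sameLabelMatrix_apply, ite_mul, zero_mul, sum_ite,
    sum_const_zero, add_zero, Pi.smul_apply, smul_eq_mul, ← mul_sum, labelClass, eq_comm]
  exact congrArg _ (Finset.sum_apply f _ _).symm

end Normalization

lemma Matrix.row_eq_of_map_mul_row_eq {m n p R S : Type*} [Fintype n]
    [NonUnitalNonAssocSemiring R] {σ : R → S} (hσ : Injective σ) {W : Matrix n p R}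
    (hW : Injective fun x : n → R => x ᵥ* W) {M : Matrix m n R} {i j : m}
    (h : (M * W).map σ i = (M * W).map σ j) : M i = M j :=
  hW <| funext fun q => hσ (congrFun h q)

theorem gcn_diff_component_diff_embedding_general (n k F F' : ℕ) (c : Fin n → Fin k)
    (A Atil Dinvsqrt Abar : Matrix (Fin n) (Fin n) ℝ)
    (X : Matrix (Fin n) (Fin F) ℝ) (W : Matrix (Fin F) (Fin F') ℝ)
    (σ : ℝ → ℝ) (H : Matrix (Fin n) (Fin F') ℝ)
    (hA : ∀ i j, A i j = if i ≠ j ∧ c i = c j then 1 else 0)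
    (hAtil : Atil = A + 1)
    (hD : Dinvsqrt = Matrix.diagonal (fun i => (Real.sqrt (∑ j, Atil i j))⁻¹))
    (hAbar : Abar = Dinvsqrt * Atil * Dinvsqrt)
    (hH : H = (Abar * X * W).map σ)
    (hσ : Function.Injective σ)
    (hW : Function.Injective (fun x : Fin F → ℝ => x ᵥ* W))
    (i j : Fin n)
    (hsum : ∀ ε : ℝ,
      (∑ v ∈ Finset.univ.filter (fun v => c v = c i), X v) ≠
        ε • (∑ u ∈ Finset.univ.filter (fun u => c u = c j), X u)) :
    H i ≠ H j := by
  intro hHij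
  have hAbar' : Abar = symmNormalize (sameLabelMatrix c) := by
    rw [hAbar, hD, hAtil, add_one_eq_sameLabelMatrix c hA, symmNormalize]
  have hrows := row_eq_of_map_mul_row_eq hσ hW (hH ▸ hHij)
  rw [hAbar', symmNormalize_sameLabelMatrix_mul_row, symmNormalize_sameLabelMatrix_mul_row,
    inv_smul_eq_iff₀ (by exact_mod_cast (card_pos.mpr ⟨i, mem_labelClass_self c i⟩).ne'),
    smul_smul] at hrows
  exact hsum _ hrows

/-- Theorem 1, part 2 (GCN form): for a disjoint union of fully connected
components encoded by `c`, with `H = σ(Ā X W)` applied entrywise, if `σ` is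
injective, `x ↦ x ᵥ* W` is injective, nodes `i, j` lie in distinct components,
and the component feature sums are never proportional, then `H i ≠ H j`. -/
theorem gcn_diff_component_diff_embedding (n k F F' : ℕ) (c : Fin n → Fin k)
    (A Atil Dinvsqrt Abar : Matrix (Fin n) (Fin n) ℝ)
    (X : Matrix (Fin n) (Fin F) ℝ) (W : Matrix (Fin F) (Fin F') ℝ)
    (σ : ℝ → ℝ) (H : Matrix (Fin n) (Fin F') ℝ)
    (hA : ∀ i j, A i j = if i ≠ j ∧ c i = c j then 1 else 0)
    (hAtil : Atil = A + 1)
    (hD : Dinvsqrt = Matrix.diagonal (fun i => (Real.sqrt (∑ j, Atil i j))⁻¹))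
    (hAbar : Abar = Dinvsqrt * Atil * Dinvsqrt)
    (hH : H = (Abar * X * W).map σ)
    (hσ : Function.Injective σ)
    (hW : Function.Injective (fun x : Fin F → ℝ => x ᵥ* W))
    (i j : Fin n) (hij : c i ≠ c j)
    (hsum : ∀ ε : ℝ,
      (∑ v ∈ Finset.univ.filter (fun v => c v = c i), X v) ≠
        ε • (∑ u ∈ Finset.univ.filter (fun u => c u = c j), X u)) :
    H i ≠ H j :=
  gcn_diff_component_diff_embedding_general n k F F' c A Atil Dinvsqrt Abar X W σ H hA hAtil hD
    hAbar hH hσ hW i j hsum
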